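/- There is an absolute constant C > 0 such that for all real x ≥ e^4 and 1 ≤ y ≤ x, ∑_{x < n ≤ x+y} (λ_5 ⋆ 𝟏)(n) ≤ C · ( M(x,y) log x + y x^{-1/2} + x^{-1/5} y^{2/5} ), where M(x,y) denotes the maximum, over integers N with (16 y² x^{-1})^{1/5} < N ≤ (2x)^{1/5}, of 𝓡( n ↦ √(x/n⁵), N, y/√(N⁵ x) ). -/

import Mathlib

instance : Fact (Nat.Prime 5) := ⟨by norm_num⟩

/-- `λ_5(n) = (τ(n)/5)` as a real number. -/
noncomputable def lam5 (n : ℕ) : ℝ :=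
  (legendreSym 5 (n.divisors.card : ℤ) : ℝ)

/-- `𝓡(f, N, δ)` : the number of integers `n ∈ [N, 2N]` with `‖f(n)‖ < δ`, where `‖t‖`
is the distance from `t` to the nearest integer. -/
noncomputable def Rcount (f : ℝ → ℝ) (N : ℕ) (δ : ℝ) : ℕ :=
  ((Finset.Icc N (2 * N)).filter (fun n : ℕ => |f n - round (f n)| < δ)).card

/-- `M(x,y)` : the maximum of `𝓡(n ↦ √(x/n⁵), N, y/√(N⁵x))` over integers `N` with
`(16y²/x)^{1/5} < N ≤ (2x)^{1/5}`. -/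
noncomputable def Mxy (x y : ℝ) : ℕ :=
  ((Finset.Icc 1 ⌊(2 * x) ^ ((1 : ℝ) / 5)⌋₊).filter
      (fun N : ℕ => (16 * y ^ 2 / x) ^ ((1 : ℝ) / 5) < (N : ℝ) ∧
        (N : ℝ) ≤ (2 * x) ^ ((1 : ℝ) / 5))).sup
    fun N => Rcount (fun t => Real.sqrt (x / t ^ 5)) N (y / Real.sqrt ((N : ℝ) ^ 5 * x))

/-!
`λ₅ ⋆ 𝟏` is multiplicative, and at `p^k` it equals `∑_{j ≤ k} ((j+1)/5)`, which is `1, 0, -1, 0, 0`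
according to `k mod 5`. Hence `(λ₅ ⋆ 𝟏)(n) ≤ 1`, it is positive only if `n = s²w⁵`, and the short
sum is at most the number of pairs `(s, w)` with `x < s²w⁵ ≤ x + y`, so `w ≤ (2x)^{1/5}`. For fixed
`w` the admissible `s` fill an interval of length at most `y / (2√(w⁵x))`. Summing `1 + y/(2w²√x)`
over `w ≤ T = (16y²/x)^{1/5}` gives `O(y/√x + T)`. For `w > T` the interval is shorter than `1/8`,
so it contains an integer only if `‖√(x/w⁵)‖ < y/√(w⁵x)`; grouping these `w` into `O(log x)`
dyadic blocks `[N, 2N]` with `N > T` bounds their number by `M(x,y)` per block.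
-/

open ArithmeticFunction Finset
open scoped ArithmeticFunction.zeta

lemma legendreSym_five (a : ℤ) :
    legendreSym 5 a = if a % 5 = 0 then 0 else if a % 5 = 1 ∨ a % 5 = 4 then 1 else -1 := by
  rw [legendreSym.mod]
  have hmod : a % 5 = 0 ∨ a % 5 = 1 ∨ a % 5 = 2 ∨ a % 5 = 3 ∨ a % 5 = 4 := by omega
  rcases hmod with h | h | h | h | h <;> simp only [Nat.cast_ofNat, h] <;> decide

lemma sum_range_legendreSym_five (k : ℕ) :
    ∑ j ∈ range (k + 1), legendreSym 5 ((j + 1 : ℕ) : ℤ) =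
      if k % 5 = 0 then 1 else if k % 5 = 2 then -1 else 0 := by
  induction k with
  | zero => simp [legendreSym_five]
  | succ k ih =>
    rw [sum_range_succ, ih, legendreSym_five]
    push_cast
    split_ifs <;> omega

noncomputable def lambdaFive : ArithmeticFunction ℤ :=
  ⟨fun n => legendreSym 5 n.divisors.card, by simp⟩

lemma lambdaFive_apply (n : ℕ) : lambdaFive n = legendreSym 5 n.divisors.card := rfl

lemma isMultiplicative_lambdaFive : lambdaFive.IsMultiplicative := by
  refine ⟨by simp [lambdaFive_apply], fun {m n} hmn => ?_⟩
  rw [lambdaFive_apply, lambdaFive_apply, lambdaFive_apply, hmn.card_divisors_mul, Nat.cast_mul,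
    legendreSym.mul]

noncomputable def lambdaFiveConvOne : ArithmeticFunction ℤ := lambdaFive * ζ

lemma isMultiplicative_lambdaFiveConvOne : lambdaFiveConvOne.IsMultiplicative :=
  isMultiplicative_lambdaFive.mul isMultiplicative_zeta.natCast

lemma lambdaFiveConvOne_apply_prime_pow {p : ℕ} (hp : p.Prime) (k : ℕ) :
    lambdaFiveConvOne (p ^ k) = if k % 5 = 0 then 1 else if k % 5 = 2 then -1 else 0 := by
  rw [lambdaFiveConvOne, coe_mul_zeta_apply, Nat.sum_divisors_prime_pow hp,
    ← sum_range_legendreSym_five]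
  refine sum_congr rfl fun j _ => ?_
  rw [lambdaFive_apply, Nat.divisors_prime_pow hp, card_map, card_range]

lemma abs_lambdaFiveConvOne_le_one (n : ℕ) : |lambdaFiveConvOne n| ≤ 1 := by
  induction n using Nat.recOnPosPrimePosCoprime with
  | zero => simp
  | one => simp [isMultiplicative_lambdaFiveConvOne.map_one]
  | prime_pow p k hp _ =>
    rw [lambdaFiveConvOne_apply_prime_pow hp]
    split_ifs <;> simp
  | coprime a b _ _ hab iha ihb =>
    rw [isMultiplicative_lambdaFiveConvOne.map_mul_of_coprime hab, abs_mul]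
    exact mul_le_one₀ iha (abs_nonneg _) ihb

lemma exists_eq_sq_mul_pow_five_of_lambdaFiveConvOne_ne_zero {n : ℕ}
    (h : lambdaFiveConvOne n ≠ 0) : ∃ s w : ℕ, n = s ^ 2 * w ^ 5 := by
  induction n using Nat.recOnPosPrimePosCoprime with
  | zero => exact ⟨0, 0, rfl⟩
  | one => exact ⟨1, 1, rfl⟩
  | prime_pow p k hp _ =>
    rw [lambdaFiveConvOne_apply_prime_pow hp] at h
    have hk : k % 5 = 0 ∨ k % 5 = 2 := by
      by_contra hk
      simp_all
    rcases hk with hk | hk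
    · exact ⟨1, p ^ (k / 5), by rw [one_pow, one_mul, ← pow_mul]; congr 1; omega⟩
    · exact ⟨p, p ^ (k / 5), by rw [← pow_mul, ← pow_add]; congr 1; omega⟩
  | coprime a b _ _ hab iha ihb =>
    rw [isMultiplicative_lambdaFiveConvOne.map_mul_of_coprime hab] at h
    obtain ⟨s, w, rfl⟩ := iha (left_ne_zero_of_mul h)
    obtain ⟨t, v, rfl⟩ := ihb (right_ne_zero_of_mul h)
    exact ⟨s * t, w * v, by ring⟩

open scoped Classical in
lemma sum_sum_divisors_lam5_le_card (S : Finset ℕ) :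
    ∑ n ∈ S, ∑ d ∈ n.divisors, lam5 d ≤ #{n ∈ S | ∃ s w : ℕ, n = s ^ 2 * w ^ 5} := by
  rw [card_filter, Nat.cast_sum]
  refine sum_le_sum fun n _ => ?_
  have hcast : ∑ d ∈ n.divisors, lam5 d = (lambdaFiveConvOne n : ℝ) := by
    rw [lambdaFiveConvOne, coe_mul_zeta_apply, Int.cast_sum]
    rfl
  rw [hcast]
  split_ifs with h
  · exact_mod_cast (le_abs_self _).trans (abs_lambdaFiveConvOne_le_one n)
  · have hzero : lambdaFiveConvOne n = 0 := by
      by_contra h0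
      exact h (exists_eq_sq_mul_pow_five_of_lambdaFiveConvOne_ne_zero h0)
    simp [hzero]

lemma floor_sqrt_div_lt_iff {z c : ℝ} (hz : 0 ≤ z) (hc : 0 < c) {s : ℕ} :
    ⌊√(z / c)⌋₊ < s ↔ z < s ^ 2 * c := by
  rw [Nat.floor_lt (Real.sqrt_nonneg _), Real.sqrt_lt (by positivity) (Nat.cast_nonneg s),
    div_lt_iff₀ hc]

lemma le_floor_sqrt_div_iff {z c : ℝ} (hz : 0 ≤ z) (hc : 0 < c) {s : ℕ} :
    s ≤ ⌊√(z / c)⌋₊ ↔ s ^ 2 * c ≤ z := by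
  rw [Nat.le_floor_iff (Real.sqrt_nonneg _), Real.le_sqrt (Nat.cast_nonneg s) (by positivity),
    le_div_iff₀ hc]

lemma natCast_floor_sub_floor_le {a b : ℝ} (ha : 0 ≤ a) (hab : a ≤ b) :
    ((⌊b⌋₊ - ⌊a⌋₊ : ℕ) : ℝ) ≤ b - a + 1 := by
  have hb := Nat.floor_le (ha.trans hab)
  have ha' := Nat.lt_floor_add_one a
  rcases le_total ⌊a⌋₊ ⌊b⌋₊ with h | h
  · rw [Nat.cast_sub h]; linarith
  · rw [Nat.sub_eq_zero_of_le h, Nat.cast_zero]; linarith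

lemma abs_sub_round_le_of_floor_lt {a b : ℝ} (ha : 0 ≤ a) (hab : b - a < 1 / 2)
    (h : ⌊a⌋₊ < ⌊b⌋₊) : |a - round a| ≤ b - a := by
  have has : a < ⌊b⌋₊ := (Nat.floor_lt ha).1 h
  have hsb : (⌊b⌋₊ : ℝ) ≤ b := Nat.floor_le (Nat.pos_of_floor_pos (by omega)).le
  have hround : round a = ⌊b⌋₊ := by
    rw [round_eq, Int.floor_eq_iff]
    push_cast
    constructor <;> linarith
  rw [hround, abs_sub_comm, abs_of_pos (by push_cast; linarith)]
  push_cast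
  linarith

lemma floor_sub_floor_le_ite {a b : ℝ} (ha : 0 ≤ a) (hab : b - a < 1 / 2) :
    ⌊b⌋₊ - ⌊a⌋₊ ≤ if |a - round a| ≤ b - a then 1 else 0 := by
  rcases le_or_gt ⌊b⌋₊ ⌊a⌋₊ with h | h
  · rw [Nat.sub_eq_zero_of_le h]; exact Nat.zero_le _
  · rw [if_pos (abs_sub_round_le_of_floor_lt ha hab h)]
    have : ⌊b⌋₊ ≤ ⌊a + 1⌋₊ := Nat.floor_le_floor (by linarith)
    rw [Nat.floor_add_one ha] at this
    omega

lemma sqrt_div_sub_sqrt_div_le {x y c : ℝ} (hx : 0 < x) (hy : 0 ≤ y) (hc : 0 < c) :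
    √((x + y) / c) - √(x / c) ≤ y / (2 * √(c * x)) := by
  set A := √(x / c)
  set B := √((x + y) / c)
  have hA : c * A ^ 2 = x := by rw [Real.sq_sqrt (by positivity)]; field_simp
  have hB : c * B ^ 2 = x + y := by rw [Real.sq_sqrt (by positivity)]; field_simp
  have hAB : A ≤ B := Real.sqrt_le_sqrt (by gcongr; linarith)
  have hcA : √(c * x) = c * A := by
    rw [← hA, show c * (c * A ^ 2) = (c * A) ^ 2 by ring, Real.sqrt_sq (by positivity)]
  have hApos : 0 < A := Real.sqrt_pos.mpr (by positivity)
  rw [hcA, le_div_iff₀ (by positivity)]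
  nlinarith [mul_nonneg hc.le (sq_nonneg (B - A))]

lemma natLog_two_add_one_le_log {x : ℝ} (hx : Real.exp 4 ≤ x) {W : ℕ}
    (hW : (W : ℝ) ≤ (2 * x) ^ ((1 : ℝ) / 5)) : (Nat.log 2 W : ℝ) + 1 ≤ Real.log x := by
  have hx0 : 0 < x := (Real.exp_pos 4).trans_le hx
  have hlogx : 4 ≤ Real.log x := by rwa [Real.le_log_iff_exp_le hx0]
  rcases Nat.eq_zero_or_pos W with rfl | hW0
  · simp only [Nat.log_zero_right, Nat.cast_zero]; linarith
  have hpow : ((2 : ℝ) ^ Nat.log 2 W) ≤ (2 * x) ^ ((1 : ℝ) / 5) :=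
    le_trans (by exact_mod_cast Nat.pow_log_le_self 2 hW0.ne') hW
  have hlog := Real.log_le_log (by positivity) hpow
  rw [Real.log_pow, Real.log_rpow (by positivity), Real.log_mul two_ne_zero hx0.ne'] at hlog
  nlinarith [Real.log_two_gt_d9]

lemma card_le_sum_card_filter_dyadic {s : Finset ℕ} {w₀ W : ℕ} (hw₀ : 0 < w₀)
    (hs : ∀ w ∈ s, w₀ ≤ w ∧ w ≤ W) :
    #s ≤ ∑ j ∈ range (Nat.log 2 W + 1), #{w ∈ s | w₀ * 2 ^ j ≤ w ∧ w ≤ 2 * (w₀ * 2 ^ j)} := by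
  refine (card_le_card fun w hw => ?_).trans card_biUnion_le
  obtain ⟨hw₀w, hwW⟩ := hs w hw
  have hlow := Nat.pow_log_le_self 2 (Nat.div_pos hw₀w hw₀).ne'
  have hhigh := Nat.lt_pow_succ_log_self one_lt_two (w / w₀)
  simp only [mem_biUnion, mem_range, mem_filter]
  refine ⟨Nat.log 2 (w / w₀), Nat.lt_succ_of_le (Nat.log_mono_right
    ((Nat.div_le_self _ _).trans hwW)), hw, ?_, ?_⟩
  · exact (Nat.mul_le_mul_left w₀ hlow).trans (Nat.mul_div_le w w₀)
  · have := (Nat.lt_mul_div_succ w hw₀).trans_le (Nat.mul_le_mul_left w₀ hhigh)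
    rw [pow_succ] at this
    linarith

/-- The number of `s : ℕ` with `x < s² w⁵ ≤ x + y` (for `0 ≤ x`, `0 ≤ y`, `0 < w`). -/
noncomputable def sqMulPowFiveCount (x y : ℝ) (w : ℕ) : ℕ :=
  ⌊√((x + y) / (w : ℝ) ^ 5)⌋₊ - ⌊√(x / (w : ℝ) ^ 5)⌋₊

open scoped Classical in
lemma card_filter_sq_mul_pow_five_le {x y : ℝ} (hx : 0 ≤ x) (hy : 0 ≤ y) {W : ℕ}
    (hW : ∀ w : ℕ, (w : ℝ) ^ 5 ≤ x + y → w ≤ W) :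
    #{n ∈ Ioc ⌊x⌋₊ ⌊x + y⌋₊ | ∃ s w : ℕ, n = s ^ 2 * w ^ 5} ≤
      ∑ w ∈ Icc 1 W, sqMulPowFiveCount x y w := by
  let roots (w : ℕ) : Finset ℕ := Ioc ⌊√(x / (w : ℝ) ^ 5)⌋₊ ⌊√((x + y) / (w : ℝ) ^ 5)⌋₊
  calc _ ≤ #((Icc 1 W).biUnion fun w => (roots w).image (· ^ 2 * w ^ 5)) := card_le_card ?_
    _ ≤ ∑ w ∈ Icc 1 W, #((roots w).image (· ^ 2 * w ^ 5)) := card_biUnion_le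
    _ ≤ _ := sum_le_sum fun w _ => card_image_le.trans (Nat.card_Ioc _ _).le
  intro n hn
  simp only [mem_filter, mem_Ioc] at hn
  obtain ⟨⟨hlo, hhi⟩, s, w, rfl⟩ := hn
  have hs : 0 < s := Nat.pos_of_ne_zero fun h => by simp [h] at hlo
  have hw : 0 < w := Nat.pos_of_ne_zero fun h => by simp [h] at hlo
  have hw5 : (0 : ℝ) < (w : ℝ) ^ 5 := by positivity
  have hlo' : x < (s : ℝ) ^ 2 * (w : ℝ) ^ 5 := by exact_mod_cast (Nat.floor_lt hx).1 hlo
  have hhi' : (s : ℝ) ^ 2 * (w : ℝ) ^ 5 ≤ x + y := by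
    exact_mod_cast (Nat.le_floor_iff (by positivity)).1 hhi
  have hws : (w : ℝ) ^ 5 ≤ (s : ℝ) ^ 2 * (w : ℝ) ^ 5 :=
    le_mul_of_one_le_left hw5.le (one_le_pow₀ (by exact_mod_cast hs))
  simp only [roots, mem_biUnion, mem_Icc, mem_image, mem_Ioc]
  exact ⟨w, ⟨hw, hW w (hws.trans hhi')⟩, s, ⟨(floor_sqrt_div_lt_iff hx hw5).2 hlo',
    (le_floor_sqrt_div_iff (by positivity) hw5).2 hhi'⟩, rfl⟩

lemma sqMulPowFiveCount_le {x y : ℝ} (hx : 0 < x) (hy : 0 ≤ y) {w : ℕ} (hw : 0 < w) :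
    (sqMulPowFiveCount x y w : ℝ) ≤ y / (2 * √x) * ((w : ℝ) ^ 2)⁻¹ + 1 := by
  have hw1 : (1 : ℝ) ≤ w := by exact_mod_cast hw
  have hw5 : (0 : ℝ) < (w : ℝ) ^ 5 := by positivity
  have hsqrt : (w : ℝ) ^ 2 * √x ≤ √((w : ℝ) ^ 5 * x) := by
    rw [Real.le_sqrt (by positivity) (by positivity), mul_pow, Real.sq_sqrt hx.le, ← pow_mul]
    gcongr
    norm_num
  calc (sqMulPowFiveCount x y w : ℝ)
      ≤ √((x + y) / (w : ℝ) ^ 5) - √(x / (w : ℝ) ^ 5) + 1 :=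
        natCast_floor_sub_floor_le (Real.sqrt_nonneg _) (Real.sqrt_le_sqrt (by gcongr; linarith))
    _ ≤ y / (2 * √((w : ℝ) ^ 5 * x)) + 1 := by gcongr; exact sqrt_div_sub_sqrt_div_le hx hy hw5
    _ ≤ y / (2 * ((w : ℝ) ^ 2 * √x)) + 1 := by gcongr
    _ = y / (2 * √x) * ((w : ℝ) ^ 2)⁻¹ + 1 := by field_simp

lemma sum_sqMulPowFiveCount_Icc_one_le {x y : ℝ} (hx : 0 < x) (hy : 0 ≤ y) (K : ℕ) :
    ((∑ w ∈ Icc 1 K, sqMulPowFiveCount x y w : ℕ) : ℝ) ≤ y / √x + K := by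
  have hinv : ∑ w ∈ Icc 1 K, ((w : ℝ) ^ 2)⁻¹ ≤ 2 := by
    have hIcc : Icc 1 K = Ioo 0 (K + 1) := by ext; simp only [mem_Icc, mem_Ioo]; omega
    simpa [hIcc] using sum_Ioo_inv_sq_le (α := ℝ) 0 (K + 1)
  push_cast
  calc ∑ w ∈ Icc 1 K, (sqMulPowFiveCount x y w : ℝ)
      ≤ ∑ w ∈ Icc 1 K, (y / (2 * √x) * ((w : ℝ) ^ 2)⁻¹ + 1) :=
        sum_le_sum fun w hw => sqMulPowFiveCount_le hx hy (mem_Icc.1 hw).1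
    _ = y / (2 * √x) * ∑ w ∈ Icc 1 K, ((w : ℝ) ^ 2)⁻¹ + K := by
        rw [sum_add_distrib, ← mul_sum, sum_const, Nat.card_Icc, nsmul_one, Nat.add_sub_cancel]
    _ ≤ y / (2 * √x) * 2 + K := by gcongr
    _ = y / √x + K := by ring

lemma sqMulPowFiveCount_le_ite {x y : ℝ} (hx : 0 < x) (hy : 0 ≤ y) {w : ℕ}
    (hw : (16 * y ^ 2 / x) ^ ((1 : ℝ) / 5) < w) :
    sqMulPowFiveCount x y w ≤
      if |√(x / (w : ℝ) ^ 5) - round √(x / (w : ℝ) ^ 5)| ≤ y / (2 * √((w : ℝ) ^ 5 * x))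
      then 1 else 0 := by
  have hw0 : (0 : ℝ) < w := (Real.rpow_nonneg (by positivity) _).trans_lt hw
  have hw5 : 16 * y ^ 2 < (w : ℝ) ^ 5 * x := by
    rw [one_div, Real.rpow_inv_lt_iff_of_pos (by positivity) hw0.le (by norm_num),
      div_lt_iff₀ hx] at hw
    exact_mod_cast hw
  have h4y : 4 * y < √((w : ℝ) ^ 5 * x) := (Real.lt_sqrt (by positivity)).2 (by linarith)
  have hgap := sqrt_div_sub_sqrt_div_le hx hy (pow_pos hw0 5)
  have hsmall : y / (2 * √((w : ℝ) ^ 5 * x)) < 1 / 2 := by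
    rw [div_lt_iff₀ (by linarith)]
    linarith
  refine (floor_sub_floor_le_ite (Real.sqrt_nonneg _) (hgap.trans_lt hsmall)).trans ?_
  split_ifs with h1 h2
  · rfl
  · exact absurd (h1.trans hgap) h2
  · exact zero_le_one
  · rfl

lemma Rcount_le_Mxy {x y : ℝ} {N : ℕ} (hN₀ : 0 < N) (hT : (16 * y ^ 2 / x) ^ ((1 : ℝ) / 5) < N)
    (hN : (N : ℝ) ≤ (2 * x) ^ ((1 : ℝ) / 5)) :
    Rcount (fun t => √(x / t ^ 5)) N (y / √((N : ℝ) ^ 5 * x)) ≤ Mxy x y :=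
  le_sup (f := fun N : ℕ => Rcount (fun t => √(x / t ^ 5)) N (y / √((N : ℝ) ^ 5 * x)))
    (mem_filter.2 ⟨mem_Icc.2 ⟨hN₀, Nat.le_floor hN⟩, hT, hN⟩)

lemma card_filter_Icc_le_Mxy {x y : ℝ} (hx : 0 < x) (hy : 0 < y) {N : ℕ} (hN₀ : 0 < N)
    (hT : (16 * y ^ 2 / x) ^ ((1 : ℝ) / 5) < N) (s : Finset ℕ)
    (hs : ∀ w ∈ s, (w : ℝ) ≤ (2 * x) ^ ((1 : ℝ) / 5) ∧
      |√(x / (w : ℝ) ^ 5) - round √(x / (w : ℝ) ^ 5)| ≤ y / (2 * √((w : ℝ) ^ 5 * x))) :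
    #{w ∈ s | N ≤ w ∧ w ≤ 2 * N} ≤ Mxy x y := by
  rcases eq_empty_or_nonempty {w ∈ s | N ≤ w ∧ w ≤ 2 * N} with h | ⟨w, hw⟩
  · rw [h, card_empty]; exact Nat.zero_le _
  obtain ⟨hws, hNw, -⟩ := mem_filter.1 hw
  refine le_trans (card_le_card fun v hv => ?_)
    (Rcount_le_Mxy hN₀ hT ((Nat.cast_le.2 hNw).trans (hs w hws).1))
  obtain ⟨hvs, hNv, hv2N⟩ := mem_filter.1 hv
  have hNpos : 0 < √((N : ℝ) ^ 5 * x) := Real.sqrt_pos.2 (by positivity)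
  refine mem_filter.2 ⟨mem_Icc.2 ⟨hNv, hv2N⟩, (hs v hvs).2.trans_lt ?_⟩
  calc y / (2 * √((v : ℝ) ^ 5 * x)) ≤ y / (2 * √((N : ℝ) ^ 5 * x)) := by gcongr
    _ < y / √((N : ℝ) ^ 5 * x) := by gcongr; linarith

lemma sum_sqMulPowFiveCount_Icc_le_mul_Mxy {x y : ℝ} (hx : 0 < x) (hy : 0 < y) {w₀ W : ℕ}
    (hw₀ : (16 * y ^ 2 / x) ^ ((1 : ℝ) / 5) < w₀) (hW : (W : ℝ) ≤ (2 * x) ^ ((1 : ℝ) / 5)) :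
    ∑ w ∈ Icc w₀ W, sqMulPowFiveCount x y w ≤ (Nat.log 2 W + 1) * Mxy x y := by
  classical
  have hw₀pos : 0 < w₀ := by exact_mod_cast (Real.rpow_nonneg (by positivity) _).trans_lt hw₀
  let good : Finset ℕ := {w ∈ Icc w₀ W |
    |√(x / (w : ℝ) ^ 5) - round √(x / (w : ℝ) ^ 5)| ≤ y / (2 * √((w : ℝ) ^ 5 * x))}
  have hgood : ∀ w ∈ good, w₀ ≤ w ∧ w ≤ W := fun w hw => mem_Icc.1 (mem_filter.1 hw).1
  calc ∑ w ∈ Icc w₀ W, sqMulPowFiveCount x y w ≤ #good := by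
        rw [card_filter]
        exact sum_le_sum fun w hw => sqMulPowFiveCount_le_ite hx hy.le
          (hw₀.trans_le (Nat.cast_le.2 (mem_Icc.1 hw).1))
    _ ≤ ∑ j ∈ range (Nat.log 2 W + 1), #{w ∈ good | w₀ * 2 ^ j ≤ w ∧ w ≤ 2 * (w₀ * 2 ^ j)} :=
        card_le_sum_card_filter_dyadic hw₀pos hgood
    _ ≤ ∑ j ∈ range (Nat.log 2 W + 1), Mxy x y := sum_le_sum fun j _ =>
        card_filter_Icc_le_Mxy hx hy (by positivity)
          (hw₀.trans_le (by exact_mod_cast Nat.le_mul_of_pos_right _ (by positivity))) good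
          fun w hw => ⟨(Nat.cast_le.2 (hgood w hw).2).trans hW, (mem_filter.1 hw).2⟩
    _ = (Nat.log 2 W + 1) * Mxy x y := by rw [sum_const, card_range, smul_eq_mul]

lemma sixteen_mul_sq_div_rpow_one_fifth_le {x y : ℝ} (hx : 0 < x) (hy : 0 ≤ y) :
    (16 * y ^ 2 / x) ^ ((1 : ℝ) / 5) ≤ 2 * (x ^ (-(1 : ℝ) / 5) * y ^ ((2 : ℝ) / 5)) := by
  have h32 : (32 * y ^ 2 / x) ^ ((1 : ℝ) / 5) = 2 * (x ^ (-(1 : ℝ) / 5) * y ^ ((2 : ℝ) / 5)) := by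
    rw [show 32 * y ^ 2 / x = 2 ^ 5 * ((y ^ 2) * x⁻¹) by ring, Real.mul_rpow (by norm_num)
      (by positivity), Real.mul_rpow (by positivity) (by positivity), ← Real.rpow_natCast,
      ← Real.rpow_natCast y, ← Real.rpow_mul (by norm_num), ← Real.rpow_mul hy, Real.inv_rpow hx.le,
      ← Real.rpow_neg hx.le]
    norm_num
    ring
  rw [← h32]
  gcongr
  norm_num

lemma sum_sqMulPowFiveCount_le {x y : ℝ} (hx : Real.exp 4 ≤ x) (hy : 0 < y) {W : ℕ}
    (hW : (W : ℝ) ≤ (2 * x) ^ ((1 : ℝ) / 5)) :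
    ((∑ w ∈ Icc 1 W, sqMulPowFiveCount x y w : ℕ) : ℝ) ≤
      y / √x + (16 * y ^ 2 / x) ^ ((1 : ℝ) / 5) + Real.log x * Mxy x y := by
  have hx0 : 0 < x := (Real.exp_pos 4).trans_le hx
  set T := (16 * y ^ 2 / x) ^ ((1 : ℝ) / 5)
  have hsplit : ∑ w ∈ Icc 1 W, sqMulPowFiveCount x y w ≤ ∑ w ∈ Icc 1 ⌊T⌋₊,
      sqMulPowFiveCount x y w + ∑ w ∈ Icc (⌊T⌋₊ + 1) W, sqMulPowFiveCount x y w := by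
    rw [← sum_union (disjoint_left.2 fun w h1 h2 => by simp only [mem_Icc] at h1 h2; omega)]
    exact sum_le_sum_of_subset fun w hw => by simp only [mem_union, mem_Icc] at hw ⊢; omega
  have hsmall := sum_sqMulPowFiveCount_Icc_one_le hx0 hy.le ⌊T⌋₊
  have hT : (⌊T⌋₊ : ℝ) ≤ T := Nat.floor_le (by positivity)
  have hlarge := sum_sqMulPowFiveCount_Icc_le_mul_Mxy hx0 hy (w₀ := ⌊T⌋₊ + 1)
    (by exact_mod_cast Nat.lt_floor_add_one T) hW
  calc ((∑ w ∈ Icc 1 W, sqMulPowFiveCount x y w : ℕ) : ℝ)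
      ≤ ((∑ w ∈ Icc 1 ⌊T⌋₊, sqMulPowFiveCount x y w : ℕ) : ℝ) +
          ((∑ w ∈ Icc (⌊T⌋₊ + 1) W, sqMulPowFiveCount x y w : ℕ) : ℝ) := by exact_mod_cast hsplit
    _ ≤ y / √x + T + ((Nat.log 2 W : ℝ) + 1) * Mxy x y := by
        exact add_le_add (hsmall.trans (by linarith)) (by exact_mod_cast hlarge)
    _ ≤ y / √x + T + Real.log x * Mxy x y := by gcongr; exact natLog_two_add_one_le_log hx hW

theorem short_sum_lam5_conv_one_le :
    ∃ C > (0 : ℝ), ∀ x y : ℝ, Real.exp 4 ≤ x → 1 ≤ y → y ≤ x →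
      ∑ n ∈ Finset.Ioc ⌊x⌋₊ ⌊x + y⌋₊, ∑ d ∈ n.divisors, lam5 d ≤
        C * ((Mxy x y : ℝ) * Real.log x + y * x ^ (-(1 : ℝ) / 2) +
          x ^ (-(1 : ℝ) / 5) * y ^ ((2 : ℝ) / 5)) := by
  refine ⟨2, two_pos, fun x y hx hy hyx => ?_⟩
  have hx0 : 0 < x := (Real.exp_pos 4).trans_le hx
  have hy0 : 0 < y := one_pos.trans_le hy
  have hcover (w : ℕ) (hw : (w : ℝ) ^ 5 ≤ x + y) : w ≤ ⌊(2 * x) ^ ((1 : ℝ) / 5)⌋₊ := by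
    refine Nat.le_floor ?_
    rw [one_div, Real.le_rpow_inv_iff_of_pos (by positivity) (by positivity) (by norm_num)]
    exact_mod_cast hw.trans (by linarith)
  have hsqrt : y / √x = y * x ^ (-(1 : ℝ) / 2) := by
    rw [Real.sqrt_eq_rpow, neg_div, Real.rpow_neg hx0.le, div_eq_mul_inv]
  have hlog : 0 ≤ Real.log x := Real.log_nonneg (by linarith [Real.add_one_le_exp 4])
  refine (sum_sum_divisors_lam5_le_card _).trans ?_
  calc _ ≤ ((∑ w ∈ Icc 1 ⌊(2 * x) ^ ((1 : ℝ) / 5)⌋₊, sqMulPowFiveCount x y w : ℕ) : ℝ) := by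
        exact_mod_cast card_filter_sq_mul_pow_five_le hx0.le hy0.le hcover
    _ ≤ y / √x + (16 * y ^ 2 / x) ^ ((1 : ℝ) / 5) + Real.log x * Mxy x y :=
        sum_sqMulPowFiveCount_le hx hy0 (Nat.floor_le (by positivity))
    _ ≤ 2 * ((Mxy x y : ℝ) * Real.log x + y * x ^ (-(1 : ℝ) / 2) +
          x ^ (-(1 : ℝ) / 5) * y ^ ((2 : ℝ) / 5)) := by
        rw [hsqrt]
        nlinarith [sixteen_mul_sq_div_rpow_one_fifth_le hx0 hy0.le,
          Real.rpow_nonneg hx0.le (-(1 : ℝ) / 2), Real.rpow_nonneg hx0.le (-(1 : ℝ) / 5),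
          Real.rpow_nonneg hy0.le ((2 : ℝ) / 5),
          mul_nonneg (Nat.cast_nonneg (α := ℝ) (Mxy x y)) hlog]
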